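/- arXiv:2102.02176 — 10 statements merged into one kernel-verified Lean document; each statement's English description precedes it below -/
import Mathlib

section
/- Let b > 0, C > 0, S > 0, μ > 0, and M ≥ (1+μ)S. Then there exists a clearing price p in the interval [1, 1 + b(C+S)] satisfying the clearing equation p = 1 + b·(C/p + max(S − M/((1+μ)p), 0)). -/
theorem clearing_price_exists
    (b C S μ M : ℝ) (hb : 0 < b) (hC : 0 < C) (hS : 0 < S) (hμ : 0 < μ)
    (hM : (1 + μ) * S ≤ M) :
    ∃ p : ℝ, 1 ≤ p ∧ p ≤ 1 + b * (C + S) ∧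
      p = 1 + b * (C / p + max (S - M / ((1 + μ) * p)) 0) := by
  set P : ℝ := 1 + b * (C + S) with hP
  set h : ℝ → ℝ := fun p => p - (1 + b * (C / p + max (S - M / ((1 + μ) * p)) 0)) with hh
  have hμ1 : (0:ℝ) < 1 + μ := by linarith
  have h1P : (1:ℝ) ≤ P := by nlinarith
  have hne : ∀ x ∈ Set.Icc (1:ℝ) P, x ≠ 0 := fun x hx => by
    have := hx.1; intro h0; linarith [h0 ▸ this]
  have hcont : ContinuousOn h (Set.Icc 1 P) := by
    apply ContinuousOn.sub continuousOn_id
    apply ContinuousOn.add continuousOn_const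
    apply ContinuousOn.mul continuousOn_const
    apply ContinuousOn.add
    · exact ContinuousOn.div continuousOn_const continuousOn_id hne
    · have : ContinuousOn (fun p : ℝ => S - M / ((1 + μ) * p)) (Set.Icc 1 P) :=
        ContinuousOn.sub continuousOn_const
          (ContinuousOn.div continuousOn_const (continuousOn_const.mul continuousOn_id)
            (fun x hx => mul_ne_zero (ne_of_gt hμ1) (hne x hx)))
      exact this.sup continuousOn_const
  have hm1 : max (S - M / ((1 + μ) * 1)) 0 = 0 := by
    apply max_eq_right
    rw [mul_one]
    have : S ≤ M / (1 + μ) := (le_div_iff₀ hμ1).2 (by linarith [hM])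
    linarith
  have hval1 : h 1 ≤ 0 := by
    simp only [hh, hm1, div_one]
    nlinarith
  have hvalP : 0 ≤ h P := by
    have hPpos : (0:ℝ) < P := lt_of_lt_of_le one_pos h1P
    have hdiv : C / P ≤ C := by
      rw [div_le_iff₀ hPpos]; nlinarith
    have hmax : max (S - M / ((1 + μ) * P)) 0 ≤ S := by
      apply max_le _ (le_of_lt hS)
      have hMpos : 0 < M := lt_of_lt_of_le (by nlinarith) hM
      have : 0 ≤ M / ((1 + μ) * P) := by positivity
      linarith
    have : b * (C / P + max (S - M / ((1 + μ) * P)) 0) ≤ b * (C + S) :=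
      mul_le_mul_of_nonneg_left (by linarith) (le_of_lt hb)
    simp only [hh]
    linarith
  obtain ⟨p, hp, hp0⟩ := intermediate_value_Icc h1P hcont ⟨hval1, hvalP⟩
  exact ⟨p, hp.1, hp.2, by simp only [hh] at hp0; linarith⟩
end

section
/- Let b > 0, C > 0, S > 0, μ > 0, and M ≥ (1+μ)S. Set p* = (1 + √(1 + 4bC))/2. Then S·p* ≤ M/(1+μ) holds if and only if C ≤ (1/(bS))·(M/(1+μ))·((M − (1+μ)S)/((1+μ)S)). -/
theorem no_margin_call_condition_iff
    (b C S μ M : ℝ) (hb : 0 < b) (hC : 0 < C) (hS : 0 < S) (hμ : 0 < μ)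
    (hM : (1 + μ) * S ≤ M) :
    S * ((1 + Real.sqrt (1 + 4 * b * C)) / 2) ≤ M / (1 + μ) ↔
      C ≤ (1 / (b * S)) * (M / (1 + μ)) * ((M - (1 + μ) * S) / ((1 + μ) * S)) := by
  have h1μ : 0 < 1 + μ := by linarith
  have hs0 : (0:ℝ) ≤ 1 + 4 * b * C := by positivity
  set s := Real.sqrt (1 + 4 * b * C) with hsdef
  have hs : s ^ 2 = 1 + 4 * b * C := Real.sq_sqrt hs0
  have hsnn : 0 ≤ s := Real.sqrt_nonneg _
  have hrw : (1 / (b * S)) * (M / (1 + μ)) * ((M - (1 + μ) * S) / ((1 + μ) * S))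
      = (M * (M - (1 + μ) * S)) / ((b * S) * ((1 + μ) * ((1 + μ) * S))) := by
    field_simp
  rw [hrw, le_div_iff₀ h1μ, le_div_iff₀ (by positivity : (0:ℝ) < b * S * ((1 + μ) * ((1 + μ) * S)))]
  have ht : 0 < (1 + μ) * S := by positivity
  have htsnn : 0 ≤ (1 + μ) * S * s := mul_nonneg ht.le hsnn
  have hkey : 4 * (C * (b * S * ((1 + μ) * ((1 + μ) * S)))) =
      ((1 + μ) * S * s) ^ 2 - ((1 + μ) * S) ^ 2 := by
    linear_combination (-((1 + μ) * S) ^ 2) * hs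
  constructor
  · intro h
    have h3 : (1 + μ) * S * s ≤ 2 * M - (1 + μ) * S := by nlinarith
    have h4 : ((1 + μ) * S * s) ^ 2 ≤ (2 * M - (1 + μ) * S) ^ 2 := by nlinarith
    nlinarith [h4, hkey]
  · intro h
    have h4 : ((1 + μ) * S * s) ^ 2 ≤ (2 * M - (1 + μ) * S) ^ 2 := by nlinarith [hkey]
    have h3 : (1 + μ) * S * s ≤ 2 * M - (1 + μ) * S := by nlinarith [h4, ht, hM, htsnn]
    nlinarith [h3]
end

section
/- Let b > 0, C > 0, S > 0, μ > 0, and M ≥ (1+μ)S. If C ≤ (1/(bS))·(M/(1+μ))·((M − (1+μ)S)/((1+μ)S)), then p* = (1 + √(1 + 4bC))/2 satisfies the full clearing equation p* = 1 + b·(C/p* + max(S − M/((1+μ)p*), 0)); in particular max(S − M/((1+μ)p*), 0) = 0 at this price. -/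
theorem no_margin_call_clearing
    (b C S μ M : ℝ) (hb : 0 < b) (hC : 0 < C) (hS : 0 < S) (hμ : 0 < μ)
    (hM : (1 + μ) * S ≤ M)
    (hc : C ≤ (1 / (b * S)) * (M / (1 + μ)) * ((M - (1 + μ) * S) / ((1 + μ) * S))) :
    (1 + Real.sqrt (1 + 4 * b * C)) / 2
      = 1 + b * (C / ((1 + Real.sqrt (1 + 4 * b * C)) / 2)
          + max (S - M / ((1 + μ) * ((1 + Real.sqrt (1 + 4 * b * C)) / 2))) 0) ∧
    max (S - M / ((1 + μ) * ((1 + Real.sqrt (1 + 4 * b * C)) / 2))) 0 = 0 := by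
  set s := Real.sqrt (1 + 4 * b * C) with hsdef
  have hpos : (0:ℝ) ≤ 1 + 4 * b * C := by nlinarith
  have hs2 : s ^ 2 = 1 + 4 * b * C := Real.sq_sqrt hpos
  have hs1 : 1 ≤ s := by
    have : Real.sqrt 1 ≤ s := Real.sqrt_le_sqrt (by nlinarith)
    simpa using this
  set p := (1 + s) / 2 with hpdef
  have hp1 : 1 ≤ p := by rw [hpdef]; linarith
  have hp0 : 0 < p := by linarith
  have hμ1 : 0 < 1 + μ := by linarith
  have hKS : 0 < (1 + μ) * S := by positivity
  have key : b * C * (((1+μ)*S) * ((1+μ)*S)) ≤ M * (M - (1+μ)*S) := by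
    have h2 : C * (b * S * ((1+μ) * ((1+μ)*S)))
        ≤ (1 / (b * S)) * (M / (1 + μ)) * ((M - (1 + μ) * S) / ((1 + μ) * S))
            * (b * S * ((1+μ) * ((1+μ)*S))) :=
      mul_le_mul_of_nonneg_right hc (by positivity)
    have h3 : (1 / (b * S)) * (M / (1 + μ)) * ((M - (1 + μ) * S) / ((1 + μ) * S))
            * (b * S * ((1+μ) * ((1+μ)*S))) = M * (M - (1+μ)*S) := by
      field_simp
    nlinarith [h2, h3]
  set K := M / ((1 + μ) * S) with hKdef
  have hbC : b * C ≤ K * (K - 1) := by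
    have hKK : K * (K - 1) = M * (M - (1+μ)*S) / (((1+μ)*S) * ((1+μ)*S)) := by
      rw [hKdef]; field_simp
    rw [hKK, le_div_iff₀ (by positivity)]
    exact key
  have hK1 : 1 ≤ K := (one_le_div hKS).mpr hM
  have hpK : p ≤ K := by
    by_contra h
    push_neg at h
    have hpp : p * (p - 1) = b * C := by
      have h2 : p * (p - 1) = (s ^ 2 - 1) / 4 := by rw [hpdef]; ring
      rw [h2, hs2]; ring
    nlinarith
  have hpp : p * (p - 1) = b * C := by
    have h2 : p * (p - 1) = (s ^ 2 - 1) / 4 := by rw [hpdef]; ring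
    rw [h2, hs2]; ring
  have hmax : max (S - M / ((1 + μ) * p)) 0 = 0 := by
    apply max_eq_right
    have hMp : S * ((1 + μ) * p) ≤ M := by
      have := (le_div_iff₀ hKS).mp hpK
      nlinarith
    have : S ≤ M / ((1 + μ) * p) := (le_div_iff₀ (by positivity)).mpr hMp
    linarith
  refine ⟨?_, hmax⟩
  rw [hmax, add_zero]
  have hd : b * (C / p) = p - 1 := by
    rw [mul_div_assoc', div_eq_iff hp0.ne']
    nlinarith [hpp]
  linarith
end

section
/- Let b > 0, S > 0, μ > 0, and M ≥ (1+μ)S. If C > (1/(bS))·(M/(1+μ))·((M − (1+μ)S)/((1+μ)S)), then the discriminant satisfies (1 + bS)² + 4b·(C − M/(1+μ)) ≥ (1/S²)·(S(1+bS) − 2M/(1+μ))² ≥ 0. -/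
theorem margin_call_discriminant_nonneg
    (b C S μ M : ℝ) (hb : 0 < b) (hS : 0 < S) (hμ : 0 < μ)
    (hM : (1 + μ) * S ≤ M)
    (hc : (1 / (b * S)) * (M / (1 + μ)) * ((M - (1 + μ) * S) / ((1 + μ) * S)) < C) :
    (1 / S ^ 2) * (S * (1 + b * S) - 2 * (M / (1 + μ))) ^ 2
      ≤ (1 + b * S) ^ 2 + 4 * b * (C - M / (1 + μ)) ∧
    0 ≤ (1 / S ^ 2) * (S * (1 + b * S) - 2 * (M / (1 + μ))) ^ 2 := by
  have hμ1 : (0:ℝ) < 1 + μ := by linarith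
  set m : ℝ := M / (1 + μ) with hm
  have hMm : M = (1 + μ) * m := by rw [hm]; field_simp
  have hc' : m * (m - S) < C * (b * S ^ 2) := by
    have h2 : (M - (1 + μ) * S) / ((1 + μ) * S) = (m - S) / S := by
      rw [hMm]; field_simp
    rw [h2, div_mul_eq_mul_div, div_mul_eq_mul_div, div_lt_iff₀ (by positivity)] at hc
    have h3 : 1 * m * ((m - S) / S) * S = m * (m - S) := by
      field_simp
    nlinarith [mul_lt_mul_of_pos_right hc hS, h3]
  constructor
  · rw [div_mul_eq_mul_div, div_le_iff₀ (by positivity)]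
    nlinarith [hc', hS, hb]
  · positivity
end

section
/- Let b > 0, S > 0, μ > 0, M ≥ (1+μ)S, and C > (1/(bS))·(M/(1+μ))·((M − (1+μ)S)/((1+μ)S)). Then the smaller root p₋ = (1 + bS − √((1+bS)² + 4b(C − M/(1+μ))))/2 of the margin-call clearing equation satisfies S·p₋ < M/(1+μ); hence no margin call would occur at p₋ and p₋ is not a valid clearing price with margin call. -/
theorem smaller_root_no_margin_call
    (b C S μ M : ℝ) (hb : 0 < b) (hS : 0 < S) (hμ : 0 < μ)
    (hM : (1 + μ) * S ≤ M)
    (hc : (1 / (b * S)) * (M / (1 + μ)) * ((M - (1 + μ) * S) / ((1 + μ) * S)) < C) :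
    S * ((1 + b * S - Real.sqrt ((1 + b * S) ^ 2 + 4 * b * (C - M / (1 + μ)))) / 2)
      < M / (1 + μ) := by
  have h1 : (0:ℝ) < 1 + μ := by linarith
  set K := M / (1 + μ) with hKdef
  have hK : S ≤ K := by rw [hKdef, le_div_iff₀ h1]; linarith
  have hK0 : 0 < K := lt_of_lt_of_le hS hK
  have hMK : M = K * (1 + μ) := by rw [hKdef]; field_simp
  have he : (1 / (b * S)) * (M / (1 + μ)) * ((M - (1 + μ) * S) / ((1 + μ) * S))
      = K * (K - S) / (b * S ^ 2) := by
    rw [hMK]; field_simp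
  rw [he] at hc
  have key : K * (K - S) < C * (b * S ^ 2) :=
    (div_lt_iff₀ (by positivity)).mp hc
  set D := (1 + b * S) ^ 2 + 4 * b * (C - K) with hDdef
  set t := S * (1 + b * S) - 2 * K with htdef
  have ht2 : t ^ 2 < S ^ 2 * D := by
    rw [htdef, hDdef]; nlinarith [sq_nonneg S, sq_nonneg K]
  have hs : t < S * Real.sqrt D := by
    rcases lt_or_ge t 0 with h | h
    · have : 0 ≤ S * Real.sqrt D := mul_nonneg hS.le (Real.sqrt_nonneg D)
      linarith
    · have hD0 : 0 ≤ D := by nlinarith [sq_nonneg t]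
      have := Real.sqrt_lt_sqrt (sq_nonneg t) ht2
      rwa [Real.sqrt_sq h, Real.sqrt_mul (sq_nonneg S), Real.sqrt_sq hS.le] at this
  nlinarith [hs]
end

section
/- Let b > 0, S > 0, μ > 0, M ≥ (1+μ)S, and C > (1/(bS))·(M/(1+μ))·((M − (1+μ)S)/((1+μ)S)). Then p* = (1 + bS + √((1+bS)² + 4b(C − M/(1+μ))))/2 satisfies (1+μ)·S·p* > M and is a clearing price, i.e., p* = 1 + b·(C/p* + max(S − M/((1+μ)p*), 0)) with max(S − M/((1+μ)p*), 0) = S − M/((1+μ)p*) > 0. -/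
theorem margin_call_clearing_price
    (b C S μ M : ℝ) (hb : 0 < b) (hC : 0 < C) (hS : 0 < S) (hμ : 0 < μ)
    (hM : (1 + μ) * S ≤ M)
    (hc : (1 / (b * S)) * (M / (1 + μ)) * ((M - (1 + μ) * S) / ((1 + μ) * S)) < C) :
    (1 + μ) * S * ((1 + b * S + Real.sqrt ((1 + b * S) ^ 2 + 4 * b * (C - M / (1 + μ)))) / 2) > M ∧
    (1 + b * S + Real.sqrt ((1 + b * S) ^ 2 + 4 * b * (C - M / (1 + μ)))) / 2
      = 1 + b * (C / ((1 + b * S + Real.sqrt ((1 + b * S) ^ 2 + 4 * b * (C - M / (1 + μ)))) / 2)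
        + max (S - M / ((1 + μ) * ((1 + b * S + Real.sqrt ((1 + b * S) ^ 2 + 4 * b * (C - M / (1 + μ)))) / 2))) 0) ∧
    max (S - M / ((1 + μ) * ((1 + b * S + Real.sqrt ((1 + b * S) ^ 2 + 4 * b * (C - M / (1 + μ)))) / 2))) 0
      = S - M / ((1 + μ) * ((1 + b * S + Real.sqrt ((1 + b * S) ^ 2 + 4 * b * (C - M / (1 + μ)))) / 2)) ∧
    0 < S - M / ((1 + μ) * ((1 + b * S + Real.sqrt ((1 + b * S) ^ 2 + 4 * b * (C - M / (1 + μ)))) / 2)) := by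
  have hμ1 : (0:ℝ) < 1 + μ := by linarith
  set m := M / (1 + μ) with hm_def
  have hMm : M = m * (1 + μ) := by rw [hm_def]; field_simp
  have hmS : S ≤ m := by
    rw [hm_def, le_div_iff₀ hμ1]; linarith
  have hm0 : 0 < m := lt_of_lt_of_le hS hmS
  rw [one_div, inv_mul_eq_div, div_mul_div_comm, div_lt_iff₀ (by positivity)] at hc
  rw [hMm] at hc
  have hc'' : m * (m - S) < C * (b * S ^ 2) := by nlinarith [hμ1]
  clear hc hm_def
  clear_value m
  set r := Real.sqrt ((1 + b * S) ^ 2 + 4 * b * (C - m)) with hr_def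
  have hkey : (2 * m - (1 + b * S) * S) ^ 2
      < S ^ 2 * ((1 + b * S) ^ 2 + 4 * b * (C - m)) := by nlinarith
  have hD : 0 ≤ (1 + b * S) ^ 2 + 4 * b * (C - m) := by
    nlinarith [sq_nonneg (2 * m - (1 + b * S) * S), sq_nonneg S, mul_pos hS hS]
  have hr2 : r ^ 2 = (1 + b * S) ^ 2 + 4 * b * (C - m) := Real.sq_sqrt hD
  have hr0 : 0 ≤ r := Real.sqrt_nonneg _
  clear hr_def
  clear_value r
  have hSr : (S * r) ^ 2 = S ^ 2 * ((1 + b * S) ^ 2 + 4 * b * (C - m)) := by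
    rw [mul_pow, hr2]
  have hpr : 2 * m - (1 + b * S) * S < S * r := by
    nlinarith [hkey, hSr, mul_nonneg hS.le hr0]
  have hSp : m < S * ((1 + b * S + r) / 2) := by nlinarith
  have hp0 : 0 < (1 + b * S + r) / 2 := by nlinarith [mul_pos hb hS]
  have hMp : M / ((1 + μ) * ((1 + b * S + r) / 2)) = m / ((1 + b * S + r) / 2) := by
    rw [← div_div, hMm]; field_simp
  have hpos : 0 < S - M / ((1 + μ) * ((1 + b * S + r) / 2)) := by
    rw [hMp]
    have h2 : m / ((1 + b * S + r) / 2) < S := by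
      rw [div_lt_iff₀ hp0]; nlinarith
    linarith
  have hmax : max (S - M / ((1 + μ) * ((1 + b * S + r) / 2))) 0
      = S - M / ((1 + μ) * ((1 + b * S + r) / 2)) := max_eq_left (le_of_lt hpos)
  have hp2 : ((1 + b * S + r) / 2) ^ 2
      = (1 + b * S) * ((1 + b * S + r) / 2) + b * (C - m) := by
    linear_combination hr2 / 4
  refine ⟨?_, ?_, hmax, hpos⟩
  · rw [hMm]; nlinarith
  · rw [hmax, hMp]
    have hpne : ((1 + b * S + r) / 2) ≠ 0 := ne_of_gt hp0
    field_simp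
    linarith [hr2]
end

section
/- Let μ > 0, α ≥ μ, β > 0, s > 0, and set c* = (1/β)·((1+α)/(1+μ))·((α−μ)/(1+μ)). Then the size of the short squeeze satisfies δ := (1/2)·[βs + √((1+βs)² + 4β(c* − (1+α)s/(1+μ))) − √(1 + 4βc*)] = max(βs − (1 − μ + 2α)/(1+μ), 0). -/
theorem short_squeeze_size
    (μ α β s : ℝ) (hμ : 0 < μ) (hα : μ ≤ α) (hβ : 0 < β) (hs : 0 < s) :
    (1 / 2) * (β * s
        + Real.sqrt ((1 + β * s) ^ 2
            + 4 * β * ((1 / β) * ((1 + α) / (1 + μ)) * ((α - μ) / (1 + μ))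
              - (1 + α) * s / (1 + μ)))
        - Real.sqrt (1 + 4 * β * ((1 / β) * ((1 + α) / (1 + μ)) * ((α - μ) / (1 + μ)))))
      = max (β * s - (1 - μ + 2 * α) / (1 + μ)) 0 := by
  have hμ1 : (0:ℝ) < 1 + μ := by linarith
  set k : ℝ := (1 - μ + 2 * α) / (1 + μ) with hk
  have hk0 : 0 ≤ k := by
    apply div_nonneg _ hμ1.le
    linarith
  have e1 : 1 + 4 * β * ((1 / β) * ((1 + α) / (1 + μ)) * ((α - μ) / (1 + μ))) = k ^ 2 := by
    rw [hk]; field_simp; ring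
  have e2 : (1 + β * s) ^ 2
      + 4 * β * ((1 / β) * ((1 + α) / (1 + μ)) * ((α - μ) / (1 + μ))
        - (1 + α) * s / (1 + μ)) = (β * s - k) ^ 2 := by
    rw [hk]; field_simp; ring
  rw [e1, e2, Real.sqrt_sq hk0, Real.sqrt_sq_eq_abs]
  rcases abs_cases (β * s - k) with ⟨h1, h2⟩ | ⟨h1, h2⟩
  · rw [h1, max_eq_left (by linarith)]; ring
  · rw [h1, max_eq_right (by linarith)]; ring
end

section
/- Let b > 0, S > 0, μ > 0, M ≥ (1+μ)S, and C > (1/(bS))·(M/(1+μ))·((M − (1+μ)S)/((1+μ)S)). Then p* = (1 + bS + √((1+bS)² + 4b(C − M/(1+μ))))/2 is the unique solution of the margin-call clearing equation p = 1 + bS + b(C − M/(1+μ))/p among prices p > 0 satisfying the margin-call condition (1+μ)·S·p > M. -/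
theorem margin_call_root_unique
    (b C S μ M : ℝ) (hb : 0 < b) (hS : 0 < S) (hμ : 0 < μ)
    (hM : (1 + μ) * S ≤ M)
    (hc : (1 / (b * S)) * (M / (1 + μ)) * ((M - (1 + μ) * S) / ((1 + μ) * S)) < C) :
    (0 < (1 + b * S + Real.sqrt ((1 + b * S) ^ 2 + 4 * b * (C - M / (1 + μ)))) / 2 ∧
      M < (1 + μ) * S * ((1 + b * S + Real.sqrt ((1 + b * S) ^ 2 + 4 * b * (C - M / (1 + μ)))) / 2) ∧
      (1 + b * S + Real.sqrt ((1 + b * S) ^ 2 + 4 * b * (C - M / (1 + μ)))) / 2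
        = 1 + b * S + b * (C - M / (1 + μ))
            / ((1 + b * S + Real.sqrt ((1 + b * S) ^ 2 + 4 * b * (C - M / (1 + μ)))) / 2)) ∧
    ∀ p : ℝ, 0 < p → M < (1 + μ) * S * p →
      p = 1 + b * S + b * (C - M / (1 + μ)) / p →
      p = (1 + b * S + Real.sqrt ((1 + b * S) ^ 2 + 4 * b * (C - M / (1 + μ)))) / 2 := by
  have hμ1 : (0:ℝ) < 1 + μ := by linarith
  set m := M / (1 + μ) with hm
  have hMm : M = (1 + μ) * m := by rw [hm]; field_simp
  have hmS : S ≤ m := by rw [hm, le_div_iff₀ hμ1]; linarith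
  have hmpos : 0 < m := lt_of_lt_of_le hS hmS
  -- rewrite hc
  have heq : (1 / (b * S)) * (M / (1 + μ)) * ((M - (1 + μ) * S) / ((1 + μ) * S))
      = m * (m - S) / (b * S ^ 2) := by
    rw [hMm]; field_simp
  rw [heq] at hc
  have hbS2 : (0:ℝ) < b * S ^ 2 := by positivity
  have hbc : m * (m - S) < C * (b * S ^ 2) := (div_lt_iff₀ hbS2).mp hc
  set A := 1 + b * S with hA
  set D := b * (C - m) with hD
  rw [show (4:ℝ) * b * (C - m) = 4 * D from by rw [hD]; ring]
  have gneg : (m / S) ^ 2 - A * (m / S) - D < 0 := by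
    have h2 : (m / S) ^ 2 - A * (m / S) - D = (m * (m - S) - C * (b * S ^ 2)) / S ^ 2 := by
      rw [hA, hD]; field_simp; ring
    rw [h2]
    exact div_neg_of_neg_of_pos (by linarith) (by positivity)
  have hΔpos : 0 < A ^ 2 + 4 * D := by
    have hid : A ^ 2 + 4 * D
        = (2 * (m / S) - A) ^ 2 - 4 * ((m / S) ^ 2 - A * (m / S) - D) := by ring
    rw [hid]
    nlinarith [sq_nonneg (2 * (m / S) - A)]
  set sΔ := Real.sqrt (A ^ 2 + 4 * D) with hsΔ
  have hsq : sΔ ^ 2 = A ^ 2 + 4 * D := Real.sq_sqrt hΔpos.le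
  have hssq : Real.sqrt ((2 * (m / S) - A) ^ 2) < sΔ := by
    apply Real.sqrt_lt_sqrt (sq_nonneg _)
    nlinarith
  have habs : |2 * (m / S) - A| < sΔ := by
    rwa [Real.sqrt_sq_eq_abs] at hssq
  have hkey1 : 2 * (m / S) - A < sΔ := lt_of_le_of_lt (le_abs_self _) habs
  have hkey2 : A - 2 * (m / S) < sΔ := by
    have h := neg_abs_le (2 * (m / S) - A)
    linarith
  have hmS0 : 0 < m / S := div_pos hmpos hS
  set q := (A + sΔ) / 2 with hq
  have hq_gt : m / S < q := by rw [hq]; linarith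
  have hq_pos : 0 < q := lt_trans hmS0 hq_gt
  have hq_quad : q * q = A * q + D := by
    rw [hq]; linear_combination hsq / 4
  have hmargin : M < (1 + μ) * S * q := by
    have h3 : (1 + μ) * S * (m / S) = (1 + μ) * m := by field_simp
    have h4 : (1 + μ) * S * (m / S) < (1 + μ) * S * q :=
      mul_lt_mul_of_pos_left hq_gt (by positivity)
    rw [hMm]; linarith [h3 ▸ h4]
  have heqn : q = A + D / q := by
    have h5 : D / q = q - A := by
      rw [div_eq_iff hq_pos.ne']; linear_combination -hq_quad
    rw [h5]; ring
  refine ⟨⟨hq_pos, hmargin, heqn⟩, ?_⟩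
  intro p hp hpM hpe
  have hpm : m / S < p := by
    rw [div_lt_iff₀ hS]
    have h8 : M < (1 + μ) * (S * p) := by rw [mul_assoc] at hpM; exact hpM
    rw [hMm] at h8
    rw [mul_comm]
    exact (mul_lt_mul_iff_right₀ hμ1).mp h8
  have hp_quad : p * p = A * p + D := by
    have h6 : p - A = D / p := by linarith [hpe]
    have h7 : (p - A) * p = D := by rw [h6]; field_simp
    linear_combination h7
  have hfac : (p - q) * (p + q - A) = 0 := by linear_combination hp_quad - hq_quad
  have hpos2 : 0 < p + q - A := by rw [hq]; linarith
  rcases mul_eq_zero.mp hfac with h | h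
  · linarith [sub_eq_zero.mp h]
  · linarith
end

section
/- Let μ > 0, α ≥ μ, β > 0, and s > 0 with βs ≤ (1 − μ + 2α)/(1+μ), and set c* = (1/β)·((1+α)/(1+μ))·((α−μ)/(1+μ)). Then the no-margin-call and margin-call clearing price formulas agree at c*, i.e., (1 + √(1 + 4βc*))/2 = (1 + βs + √((1+βs)² + 4β(c* − (1+α)s/(1+μ))))/2, so the clearing price is continuous at c* and the size of the short squeeze is zero. -/
theorem no_squeeze_prices_agree
    (μ α β s : ℝ) (hμ : 0 < μ) (hα : μ ≤ α) (hβ : 0 < β) (hs : 0 < s)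
    (hβs : β * s ≤ (1 - μ + 2 * α) / (1 + μ)) :
    (1 + Real.sqrt (1 + 4 * β * ((1 / β) * ((1 + α) / (1 + μ)) * ((α - μ) / (1 + μ))))) / 2
      = (1 + β * s
          + Real.sqrt ((1 + β * s) ^ 2
              + 4 * β * ((1 / β) * ((1 + α) / (1 + μ)) * ((α - μ) / (1 + μ))
                - (1 + α) * s / (1 + μ)))) / 2 := by
  have hμ1 : (0:ℝ) < 1 + μ := by linarith
  have hβ' : β ≠ 0 := ne_of_gt hβ
  have hμ1' : (1:ℝ) + μ ≠ 0 := ne_of_gt hμ1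
  set A : ℝ := (1 + α) / (1 + μ) with hAdef
  have hA1 : 1 ≤ A := by
    rw [hAdef, le_div_iff₀ hμ1]; linarith
  have hβs' : β * s ≤ 2 * A - 1 := by
    have h2A : 2 * A - 1 = (1 - μ + 2 * α) / (1 + μ) := by
      rw [hAdef]; field_simp; ring
    linarith [hβs, h2A.ge]
  have h1 : 1 + 4 * β * ((1 / β) * A * ((α - μ) / (1 + μ))) = (2 * A - 1) ^ 2 := by
    rw [hAdef]; field_simp; ring
  have h2 : (1 + β * s) ^ 2
      + 4 * β * ((1 / β) * A * ((α - μ) / (1 + μ)) - (1 + α) * s / (1 + μ))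
      = (2 * A - 1 - β * s) ^ 2 := by
    rw [hAdef]; field_simp; ring
  rw [h1, h2, Real.sqrt_sq (by linarith), Real.sqrt_sq (by linarith)]
  ring
end

section
/- Let μ > 0, α ≥ μ, β > 0, and s > 0 with βs > (1 − μ + 2α)/(1+μ), and set c* = (1/β)·((1+α)/(1+μ))·((α−μ)/(1+μ)). Then the margin-call clearing price exceeds the no-margin-call clearing price at c* by exactly βs − (1 − μ + 2α)/(1+μ) > 0, i.e., (1 + βs + √((1+βs)² + 4β(c* − (1+α)s/(1+μ))))/2 − (1 + √(1 + 4βc*))/2 = βs − (1 − μ + 2α)/(1+μ). -/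
theorem squeeze_jump_size
    (μ α β s : ℝ) (hμ : 0 < μ) (hα : μ ≤ α) (hβ : 0 < β) (hs : 0 < s)
    (hβs : (1 - μ + 2 * α) / (1 + μ) < β * s) :
    (1 + β * s
        + Real.sqrt ((1 + β * s) ^ 2
            + 4 * β * ((1 / β) * ((1 + α) / (1 + μ)) * ((α - μ) / (1 + μ))
              - (1 + α) * s / (1 + μ)))) / 2
      - (1 + Real.sqrt (1 + 4 * β * ((1 / β) * ((1 + α) / (1 + μ)) * ((α - μ) / (1 + μ))))) / 2
      = β * s - (1 - μ + 2 * α) / (1 + μ) := by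
  have hμ1 : (0:ℝ) < 1 + μ := by linarith
  have hβne : β ≠ 0 := ne_of_gt hβ
  have hμne : (1 + μ) ≠ 0 := ne_of_gt hμ1
  have hq : (0:ℝ) ≤ (1 - μ + 2 * α) / (1 + μ) := by
    apply div_nonneg _ (le_of_lt hμ1); linarith
  have h1 : (1 + β * s) ^ 2
            + 4 * β * ((1 / β) * ((1 + α) / (1 + μ)) * ((α - μ) / (1 + μ))
              - (1 + α) * s / (1 + μ))
      = (β * s - (1 - μ + 2 * α) / (1 + μ)) ^ 2 := by
    field_simp
    ring
  have h2 : 1 + 4 * β * ((1 / β) * ((1 + α) / (1 + μ)) * ((α - μ) / (1 + μ)))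
      = ((1 - μ + 2 * α) / (1 + μ)) ^ 2 := by
    field_simp
    ring
  rw [h1, h2, Real.sqrt_sq (by linarith), Real.sqrt_sq hq]
  ring
end
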